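/- For every integer a ≥ 1, every λ ∈ [0,1) and every t ∈ ℝ: a e^{−2t} ∑_{k∈ℤ} I_{ka}(2t) e^{−2πikλ} = ∑_{j=0}^{a−1} exp( −4t sin²( π(j+λ)/a ) ). -/

import Mathlib

/-!
Multiplying the exponential series of `exp (x w / 2)` and `exp (x w⁻¹ / 2)` and grouping the
terms `(x w / 2)^p (x w⁻¹ / 2)^q` by `k = p - q` gives the generating function
`∑ₖ I_k(x) w^k = exp ((x / 2) (w + w⁻¹))`. At the points `w_j = e^{-2πi(j+λ)/a}`, `j < a`,
the right-hand side for `x = 2t` is `exp (2t cos (2π(j+λ)/a)) = e^{2t} exp (-4t sin² (π(j+λ)/a))`.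
Summing over `j`, the orthogonality of the `a`-th roots of unity kills every order `k` not
divisible by `a`, and the twist `e^{-2πiλk/a}` survives as `e^{-2πiλm}` for `k = m a`.
-/

open Real Filter MeasureTheory

/-- Modified Bessel function of the first kind of integer order `m`,
`I_m(t) = ∑_{j=0}^∞ (t/2)^{2j+|m|} / (j! (j+|m|)!)`. -/
noncomputable def besselI (m : ℤ) (t : ℝ) : ℝ :=
  ∑' j : ℕ, (t / 2) ^ (2 * j + m.natAbs) /
    ((Nat.factorial j : ℝ) * (Nat.factorial (j + m.natAbs) : ℝ))

open scoped Complex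
open Finset

lemma ofReal_besselI (m : ℤ) (x : ℝ) :
    (besselI m x : ℂ) = ∑' j : ℕ, ((x : ℂ) / 2) ^ (2 * j + m.natAbs) /
      ((j.factorial : ℂ) * ((j + m.natAbs).factorial : ℂ)) := by
  rw [besselI, Complex.ofReal_tsum]
  push_cast
  rfl

lemma Complex.hasSum_exp_mul_exp (v v' : ℂ) :
    HasSum (fun pq : ℕ × ℕ => v ^ pq.1 / (pq.1.factorial : ℂ) * (v' ^ pq.2 / (pq.2.factorial : ℂ)))
      (cexp v * cexp v') := by
  rw [Complex.exp_eq_exp_ℂ]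
  exact HasSum.mul (f := fun n : ℕ => v ^ n / (n.factorial : ℂ))
    (g := fun n : ℕ => v' ^ n / (n.factorial : ℂ))
    (NormedSpace.expSeries_div_hasSum_exp v) (NormedSpace.expSeries_div_hasSum_exp v')
    (summable_mul_of_summable_norm (f := fun n : ℕ => v ^ n / (n.factorial : ℂ))
      (g := fun n : ℕ => v' ^ n / (n.factorial : ℂ))
      (NormedSpace.norm_expSeries_div_summable v) (NormedSpace.norm_expSeries_div_summable v'))

/-- `(k, j) ↦ (p, q)` with `p - q = k` and `min p q = j`: the pairs of exponents in
`(x w / 2)^p (x w⁻¹ / 2)^q` that contribute the `j`-th term of `I_k(x) w^k`. -/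
def besselIndexEquiv : ℤ × ℕ ≃ ℕ × ℕ where
  toFun kj := (kj.2 + kj.1.toNat, kj.2 + (-kj.1).toNat)
  invFun pq := ((pq.1 : ℤ) - pq.2, min pq.1 pq.2)
  left_inv := by rintro ⟨k, j⟩; simp only [Prod.mk.injEq]; omega
  right_inv := by rintro ⟨p, q⟩; simp only [Prod.mk.injEq]; omega

lemma pow_div_factorial_mul_pow_div_factorial_besselIndexEquiv {K : Type*} [Field K] [CharZero K]
    (u : K) {w : K} (hw : w ≠ 0) (k : ℤ) (j : ℕ) :
    (u * w) ^ (besselIndexEquiv (k, j)).1 / ((besselIndexEquiv (k, j)).1.factorial : K) *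
      ((u * w⁻¹) ^ (besselIndexEquiv (k, j)).2 / ((besselIndexEquiv (k, j)).2.factorial : K)) =
      u ^ (2 * j + k.natAbs) / ((j.factorial : K) * ((j + k.natAbs).factorial : K)) * w ^ k := by
  obtain ⟨n, rfl | rfl⟩ := Int.eq_nat_or_neg k <;>
    simp [besselIndexEquiv, mul_pow, inv_pow] <;> field_simp <;> ring

theorem hasSum_besselI_mul_zpow (x : ℝ) {w : ℂ} (hw : w ≠ 0) :
    HasSum (fun k : ℤ => (besselI k x : ℂ) * w ^ k) (cexp (x / 2 * w) * cexp (x / 2 * w⁻¹)) := by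
  set u : ℂ := x / 2
  have hprod := Complex.hasSum_exp_mul_exp (u * w) (u * w⁻¹)
  have hdouble : HasSum (fun kj : ℤ × ℕ => u ^ (2 * kj.2 + kj.1.natAbs) /
      ((kj.2.factorial : ℂ) * ((kj.2 + kj.1.natAbs).factorial : ℂ)) * w ^ kj.1)
      (cexp (u * w) * cexp (u * w⁻¹)) := by
    rw [← besselIndexEquiv.hasSum_iff] at hprod
    convert hprod using 1
    funext ⟨k, j⟩
    exact (pow_div_factorial_mul_pow_div_factorial_besselIndexEquiv u hw k j).symm
  refine hdouble.prod_fiberwise fun k => ?_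
  have hfiber : Summable fun j : ℕ => u ^ (2 * j + k.natAbs) /
      ((j.factorial : ℂ) * ((j + k.natAbs).factorial : ℂ)) :=
    (summable_mul_right_iff (zpow_ne_zero k hw)).mp (hdouble.summable.prod_factor k)
  rw [ofReal_besselI]
  exact hfiber.hasSum.mul_right (w ^ k)

open Complex in
theorem hasSum_besselI_mul_exp_mul_I_zpow (t θ : ℝ) :
    HasSum (fun k : ℤ => (besselI k (2 * t) : ℂ) * cexp (θ * I) ^ k)
      (Real.exp (2 * t * Real.cos θ)) := by
  convert hasSum_besselI_mul_zpow (2 * t) (exp_ne_zero (θ * I)) using 1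
  rw [← Complex.exp_neg, ← Complex.exp_add, ofReal_exp, ← mul_add, ← neg_mul, ← two_cos]
  push_cast
  congr 1
  ring

lemma Real.exp_neg_four_mul_mul_sin_sq (t φ : ℝ) :
    exp (-4 * t * sin φ ^ 2) = exp (2 * t * cos (2 * φ)) * exp (-2 * t) := by
  rw [← exp_add, cos_two_mul, cos_sq']
  ring_nf

lemma IsPrimitiveRoot.sum_range_mul_pow_zpow {K : Type*} [Field K] {ζ : K} {n : ℕ}
    (hζ : IsPrimitiveRoot ζ n) (c : K) (k : ℤ) :
    ∑ j ∈ range n, (c * ζ ^ j) ^ k = if (n : ℤ) ∣ k then n * c ^ k else 0 := by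
  have hpow (j : ℕ) : (c * ζ ^ j) ^ k = c ^ k * (ζ ^ k) ^ j := by
    rw [mul_zpow, ← zpow_natCast, ← zpow_natCast, zpow_comm]
  simp_rw [hpow, ← mul_sum]
  split_ifs with hk
  · simp [(hζ.zpow_eq_one_iff_dvd k).mpr hk, mul_comm]
  · have hne : ζ ^ k ≠ 1 := mt (hζ.zpow_eq_one_iff_dvd k).mp hk
    have hn : (ζ ^ k) ^ n = 1 := by
      rw [← zpow_natCast, zpow_comm, zpow_natCast, hζ.pow_eq_one, one_zpow]
    rw [geom_sum_eq hne, hn, sub_self, zero_div, mul_zero]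

lemma hasSum_ite_dvd_iff {α : Type*} [AddCommMonoid α] [TopologicalSpace α] {n : ℕ} (hn : n ≠ 0)
    (f : ℤ → α) (s : α) :
    HasSum (fun k : ℤ => if (n : ℤ) ∣ k then f k else 0) s ↔
      HasSum (fun m : ℤ => f (m * n)) s := by
  have hinj : Function.Injective (· * (n : ℤ)) := mul_left_injective₀ (by exact_mod_cast hn)
  rw [← hinj.hasSum_iff]
  · simp [Function.comp_def]
  · rintro k hk
    rw [if_neg]
    rintro ⟨m, rfl⟩
    exact hk ⟨m, mul_comm _ _⟩

open Complex in
theorem twisted_circle_theta_general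
    (a : ℕ) (ha : 1 ≤ a) (lam : ℝ) (t : ℝ) :
    (a : ℂ) * Complex.exp (-2 * (t : ℂ)) *
        ∑' k : ℤ, ((besselI (k * (a : ℤ)) (2 * t) : ℝ) : ℂ) *
          Complex.exp (-2 * (π : ℂ) * Complex.I * (k : ℂ) * (lam : ℂ)) =
      ((∑ j ∈ Finset.range a,
          Real.exp (-4 * t * Real.sin (π * ((j : ℝ) + lam) / (a : ℝ)) ^ 2) : ℝ) : ℂ) := by
  have ha0 : a ≠ 0 := by omega
  have hw (j : ℕ) : cexp (-(2 * π * lam / a) * I) * (cexp (2 * π * I / a))⁻¹ ^ j =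
      cexp ((-(2 * (π * (j + lam) / a)) : ℝ) * I) := by
    rw [← Complex.exp_neg, ← Complex.exp_nat_mul, ← Complex.exp_add]
    congr 1
    push_cast
    ring
  have htwist (m : ℤ) :
      cexp (-(2 * π * lam / a) * I) ^ (m * (a : ℤ)) = cexp (-2 * π * I * m * lam) := by
    rw [← Complex.exp_int_mul]
    congr 1
    push_cast
    field_simp
  have hsum := hasSum_sum fun j (_ : j ∈ range a) =>
    hasSum_besselI_mul_exp_mul_I_zpow t (-(2 * (π * (j + lam) / a)))
  simp_rw [← hw, ← mul_sum, (isPrimitiveRoot_exp a ha0).inv.sum_range_mul_pow_zpow, mul_ite,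
    mul_zero, hasSum_ite_dvd_iff ha0, htwist] at hsum
  have hseries : (a : ℂ) * ∑' m : ℤ, (besselI (m * a) (2 * t) : ℂ) * cexp (-2 * π * I * m * lam) =
      ∑ j ∈ range a, (Real.exp (2 * t * Real.cos (-(2 * (π * (j + lam) / a)))) : ℂ) := by
    rw [← hsum.tsum_eq, ← tsum_mul_left]
    exact tsum_congr fun m => by ring
  rw [mul_right_comm, hseries]
  simp_rw [Real.exp_neg_four_mul_mul_sin_sq, Real.cos_neg]
  push_cast [sum_mul]
  rfl

/-- Theta function of a twisted discrete circle:
`a e^{−2t} ∑_{k∈ℤ} I_{ka}(2t) e^{−2πikλ} = ∑_{j=0}^{a−1} exp(−4t sin²(π(j+λ)/a))`. -/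
theorem twisted_circle_theta
    (a : ℕ) (ha : 1 ≤ a) (lam : ℝ) (hlam : lam ∈ Set.Ico (0 : ℝ) 1) (t : ℝ) :
    (a : ℂ) * Complex.exp (-2 * (t : ℂ)) *
        ∑' k : ℤ, ((besselI (k * (a : ℤ)) (2 * t) : ℝ) : ℂ) *
          Complex.exp (-2 * (π : ℂ) * Complex.I * (k : ℂ) * (lam : ℂ)) =
      ((∑ j ∈ Finset.range a,
          Real.exp (-4 * t * Real.sin (π * ((j : ℝ) + lam) / (a : ℝ)) ^ 2) : ℝ) : ℂ) :=
  twisted_circle_theta_general a ha lam t
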